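/- arXiv:1808.10162 — 9 statements merged into one kernel-verified Lean document; each statement's English description precedes it below -/
import Mathlib

section
/- Let D ⊆ ℝⁿ be a closed convex cone with D ∩ (−D) = {0}. Then there exists a linear form ω: ℝⁿ → ℝ such that D ∩ ker(ω) = {0} and ω(x) ≥ 0 for all x ∈ D; in particular ω(x) > 0 for all nonzero x ∈ D. -/
/-!
For each nonzero `x` in the pointed cone `D`, the point `-x` lies outside `D`, so Hahn–Banach
separation gives a functional that is nonnegative on `D` and positive at `x`. Its positivity is an
open condition, so finitely many of these functionals already cover the compact set of unit
vectors of `D`; their sum is nonnegative on `D` and positive on every unit vector of `D`, hence,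
by homogeneity, on every nonzero vector of `D`.
-/

open Metric

section Separation

variable {E : Type*} [AddCommGroup E] [TopologicalSpace E] [IsTopologicalAddGroup E]
  [Module ℝ E] [ContinuousSMul ℝ E] [LocallyConvexSpace ℝ E]

theorem exists_clm_nonneg_on_cone_pos_of_neg_notMem {D : Set E} (hclosed : IsClosed D)
    (hconv : Convex ℝ D) (hcone : ∀ x ∈ D, ∀ r : ℝ, 0 ≤ r → r • x ∈ D) (h0 : (0 : E) ∈ D)
    {x : E} (hx : -x ∉ D) :
    ∃ f : E →L[ℝ] ℝ, (∀ y ∈ D, 0 ≤ f y) ∧ 0 < f x := by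
  obtain ⟨f, u, hfx, hfD⟩ := geometric_hahn_banach_point_closed hconv hclosed hx
  have hu : u < 0 := by simpa using hfD 0 h0
  refine ⟨f, fun y hy => ?_, by linarith [map_neg f x]⟩
  by_contra! hfy
  -- Scaling `y` by `u / f y > 0` would put `f` equal to `u` somewhere on `D`.
  have := hfD _ (hcone y hy (u / f y) (div_nonneg_of_nonpos hu.le hfy.le))
  rw [map_smul, smul_eq_mul, div_mul_cancel₀ u hfy.ne] at this
  exact lt_irrefl u this

end Separation

theorem IsCompact.exists_clm_nonneg_on_pos_on {E : Type*} [AddCommMonoid E] [TopologicalSpace E]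
    [Module ℝ E] {S D : Set E} (hS : IsCompact S) (hSD : S ⊆ D)
    (h : ∀ x ∈ S, ∃ f : E →L[ℝ] ℝ, (∀ y ∈ D, 0 ≤ f y) ∧ 0 < f x) :
    ∃ f : E →L[ℝ] ℝ, (∀ y ∈ D, 0 ≤ f y) ∧ ∀ x ∈ S, 0 < f x := by
  choose g hg_nonneg hg_pos using h
  obtain ⟨t, ht⟩ := hS.elim_finite_subcover (fun x : S => {y | 0 < g x x.2 y})
    (fun x => isOpen_lt continuous_const (g x x.2).continuous)
    (fun x hx => Set.mem_iUnion.2 ⟨⟨x, hx⟩, hg_pos x hx⟩)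
  have hterm_nonneg : ∀ y ∈ D, ∀ x ∈ t, 0 ≤ g x x.2 y := fun y hy x _ => hg_nonneg x x.2 y hy
  refine ⟨∑ x ∈ t, g x x.2, fun y hy => ?_, fun y hy => ?_⟩
  · simpa using Finset.sum_nonneg (hterm_nonneg y hy)
  · obtain ⟨x, hxt, hxy⟩ := Set.mem_iUnion₂.1 (ht hy)
    simpa using Finset.sum_pos' (hterm_nonneg y (hSD hy)) ⟨x, hxt, hxy⟩

theorem pos_of_pos_on_sphere {E : Type*} [NormedAddCommGroup E] [NormedSpace ℝ E] {D : Set E}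
    (hcone : ∀ x ∈ D, ∀ r : ℝ, 0 ≤ r → r • x ∈ D) {f : E →L[ℝ] ℝ}
    (hf : ∀ x ∈ D ∩ sphere 0 1, 0 < f x) {x : E} (hx : x ∈ D) (hx0 : x ≠ 0) : 0 < f x := by
  have hnorm : 0 < ‖x‖ := norm_pos_iff.2 hx0
  have hunit : ‖x‖⁻¹ • x ∈ D ∩ sphere 0 1 :=
    ⟨hcone x hx _ (inv_nonneg.2 hnorm.le), by simp [norm_smul, hnorm.ne']⟩
  have := hf _ hunit
  rw [map_smul, smul_eq_mul] at this
  exact pos_of_mul_pos_right this (inv_nonneg.2 hnorm.le)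

/-- A closed pointed convex cone `D ⊆ ℝⁿ` admits a linear form `ω`
with `D ∩ ker ω = {0}` and `ω ≥ 0` on `D`; in particular `ω > 0` on `D \ {0}`. -/
theorem separating_linear_form (n : ℕ) (D : Set (Fin n → ℝ))
    (hclosed : IsClosed D) (hconv : Convex ℝ D)
    (hcone : ∀ x ∈ D, ∀ r : ℝ, 0 ≤ r → r • x ∈ D)
    (hpointed : {x | x ∈ D ∧ -x ∈ D} = {0}) :
    ∃ ω : (Fin n → ℝ) →ₗ[ℝ] ℝ,
      (∀ x ∈ D, ω x = 0 → x = 0) ∧ (∀ x ∈ D, 0 ≤ ω x) ∧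
      (∀ x ∈ D, x ≠ 0 → 0 < ω x) := by
  have hneg_notMem : ∀ x ∈ D, x ≠ 0 → -x ∉ D := fun x hx hx0 hnx =>
    hx0 (by simpa using hpointed.subset ⟨hx, hnx⟩)
  have h0 : (0 : Fin n → ℝ) ∈ D := (hpointed.symm.subset rfl).1
  have hsphere : IsCompact (D ∩ sphere 0 1) := (isCompact_sphere 0 1).inter_left hclosed
  obtain ⟨f, hf_nonneg, hf_pos⟩ := hsphere.exists_clm_nonneg_on_pos_on Set.inter_subset_left
    fun x hx => exists_clm_nonneg_on_cone_pos_of_neg_notMem hclosed hconv hcone h0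
      (hneg_notMem x hx.1 (ne_zero_of_mem_unit_sphere ⟨x, hx.2⟩))
  have hpos : ∀ x ∈ D, x ≠ 0 → 0 < f x := fun x hx hx0 => pos_of_pos_on_sphere hcone hf_pos hx hx0
  refine ⟨f, fun x hx hfx => ?_, hf_nonneg, hpos⟩
  by_contra hx0
  exact (hpos x hx hx0).ne' hfx
end

section
/- Let A be a finitely generated abelian group, C ⊆ A a strongly strict submonoid, Z = C ∩ (−C) the subgroup of quasi-zero elements, D ⊆ A ⊗ ℝ a closed cone with D ∩ (−D) = {0} and C ⊆ ι_ℝ⁻¹(D), and ω a linear form on A ⊗ ℝ with ω > 0 on D \ {0} and D ∩ ker ω = {0}. Then inf{ω(ι_ℝ(x)) : x ∈ C \ Z} > 0. -/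
/-!
Modulo torsion, `A` is free and `ι` carries a `ℤ`-basis of `A ⧸ torsion` to an `ℝ`-basis of `V`;
hence `ι` kills exactly the torsion of `A`, and `ι '' A` is a discrete lattice, so
`‖ι x‖ ≥ r > 0` whenever `ι x ≠ 0`. On the other hand `ω` is bounded below by `c > 0` on the
compact set `D ∩ sphere 0 1`, so `ω v ≥ c ‖v‖` on the cone `D`. If `x ∈ C \ Z` then `x` has
infinite order (a torsion element of a submonoid has its negative in it too), so `ι x ≠ 0` and
`ω (ι x) ≥ c r`.
-/

open Submodule

lemma AddSubmonoid.neg_mem_of_isOfFinAddOrder {G : Type*} [AddGroup G] {C : AddSubmonoid G}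
    {x : G} (hx : x ∈ C) (hfin : IsOfFinAddOrder x) : -x ∈ C :=
  AddSubmonoid.multiples_le.mpr hx <|
    hfin.mem_multiples_iff_mem_zmultiples.mpr (neg_mem (AddSubgroup.mem_zmultiples x))

lemma exists_pos_le_norm_of_discreteTopology (E : Type*) [SeminormedAddGroup E]
    [DiscreteTopology E] : ∃ r > 0, ∀ x : E, x ≠ 0 → r ≤ ‖x‖ := by
  obtain ⟨r, hr, hball⟩ := Metric.isOpen_singleton_iff.mp (isOpen_discrete ({0} : Set E))
  exact ⟨r, hr, fun x hx => not_lt.mp fun hlt => hx (hball x (by simpa using hlt))⟩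

lemma Submodule.torsion_le_ker {R M N : Type*} [CommRing R] [IsDomain R]
    [AddCommGroup M] [Module R M] [AddCommGroup N] [Module R N] [Module.IsTorsionFree R N]
    (f : M →ₗ[R] N) : torsion R M ≤ LinearMap.ker f := by
  rintro x ⟨a, hax⟩
  have hfx : f x ∈ torsion R N :=
    ⟨a, by rw [Submonoid.smul_def, ← map_smul, ← Submonoid.smul_def, hax, map_zero]⟩
  rwa [isTorsionFree_iff_torsion_eq_bot.mp ‹_›, mem_bot] at hfx

lemma IsBaseChange.liftQ {R S M N : Type*} [CommRing R] [CommRing S] [Algebra R S]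
    [AddCommGroup M] [Module R M] [AddCommGroup N] [Module R N] [Module S N]
    [IsScalarTower R S N] {f : M →ₗ[R] N} (hf : IsBaseChange S f) (p : Submodule R M)
    (hp : p ≤ LinearMap.ker f) : IsBaseChange S (p.liftQ f hp) := by
  refine IsBaseChange.of_lift_unique _ fun Q _ _ _ _ g => ⟨hf.lift (g ∘ₗ p.mkQ), ?_, ?_⟩ <;>
    dsimp only
  · exact LinearMap.ext fun q => Submodule.Quotient.induction_on p q (hf.lift_eq (g ∘ₗ p.mkQ))
  · intro g' hg'
    refine hf.algHom_ext _ _ fun x => ?_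
    rw [hf.lift_eq]
    exact congr($hg' (p.mkQ x))

lemma Submodule.torsion_int_le_ker {A V : Type*} [AddCommGroup A] [AddCommGroup V] [Module ℝ V]
    (ι : A →ₗ[ℤ] V) : torsion ℤ A ≤ LinearMap.ker ι :=
  have := Module.IsTorsionFree.trans_faithfulSMul ℤ ℝ V
  torsion_le_ker ι

namespace IsBaseChange

variable {A V : Type*} [AddCommGroup A] [AddGroup.FG A] [AddCommGroup V] [Module ℝ V]
  {ι : A →ₗ[ℤ] V}

noncomputable def torsionFreeBasis (hbc : IsBaseChange ℝ ι) :
    Module.Basis (Module.Free.ChooseBasisIndex ℤ (A ⧸ torsion ℤ A)) ℝ V :=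
  (hbc.liftQ _ (torsion_int_le_ker ι)).basis (Module.Free.chooseBasis ℤ _)

lemma torsionFreeBasis_repr_apply (hbc : IsBaseChange ℝ ι) (x : A)
    (i : Module.Free.ChooseBasisIndex ℤ (A ⧸ torsion ℤ A)) :
    hbc.torsionFreeBasis.repr (ι x) i =
      (Module.Free.chooseBasis ℤ (A ⧸ torsion ℤ A)).repr (Submodule.Quotient.mk x) i :=
  (hbc.liftQ _ (torsion_int_le_ker ι)).basis_repr_comp_apply _ (Submodule.Quotient.mk x) i

lemma isOfFinAddOrder_of_eq_zero (hbc : IsBaseChange ℝ ι) {x : A} (hx : ι x = 0) :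
    IsOfFinAddOrder x := by
  have hmk : Submodule.Quotient.mk (p := torsion ℤ A) x = 0 := by
    rw [← (Module.Free.chooseBasis ℤ _).repr.map_eq_zero_iff]
    ext i
    simpa [hx] using (hbc.torsionFreeBasis_repr_apply x i).symm
  rw [Submodule.Quotient.mk_eq_zero, ← Submodule.mem_toAddSubgroup, torsion_int] at hmk
  exact (AddCommGroup.mem_torsion x).mp hmk

lemma mem_span_torsionFreeBasis (hbc : IsBaseChange ℝ ι) (x : A) :
    ι x ∈ span ℤ (Set.range hbc.torsionFreeBasis) :=
  (hbc.torsionFreeBasis.mem_span_iff_repr_mem ℤ _).mpr fun i =>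
    ⟨_, (hbc.torsionFreeBasis_repr_apply x i).symm⟩

lemma finiteDimensional (hbc : IsBaseChange ℝ ι) : FiniteDimensional ℝ V :=
  .of_basis hbc.torsionFreeBasis

end IsBaseChange

lemma IsBaseChange.exists_pos_le_norm {A V : Type*} [AddCommGroup A] [AddGroup.FG A]
    [NormedAddCommGroup V] [NormedSpace ℝ V] {ι : A →ₗ[ℤ] V} (hbc : IsBaseChange ℝ ι) :
    ∃ r > 0, ∀ x : A, ι x ≠ 0 → r ≤ ‖ι x‖ := by
  obtain ⟨r, hr, hle⟩ :=
    exists_pos_le_norm_of_discreteTopology (span ℤ (Set.range hbc.torsionFreeBasis))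
  exact ⟨r, hr, fun x hx => hle ⟨ι x, hbc.mem_span_torsionFreeBasis x⟩
    fun h => hx (congrArg Subtype.val h)⟩

lemma exists_pos_mul_norm_le_of_isClosed_cone {V : Type*} [NormedAddCommGroup V]
    [NormedSpace ℝ V] [FiniteDimensional ℝ V] {D : Set V} (hDclosed : IsClosed D)
    (hDcone : ∀ v ∈ D, ∀ r : ℝ, 0 ≤ r → r • v ∈ D) (ω : V →ₗ[ℝ] ℝ)
    (hω : ∀ v ∈ D, v ≠ 0 → 0 < ω v) : ∃ c > 0, ∀ v ∈ D, c * ‖v‖ ≤ ω v := by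
  have hK : IsCompact (D ∩ Metric.sphere 0 1) := (isCompact_sphere 0 1).inter_left hDclosed
  obtain ⟨c, hc, hcK⟩ := hK.exists_forall_le' ω.continuous_of_finiteDimensional.continuousOn
    fun u hu => hω u hu.1 (ne_zero_of_mem_unit_sphere ⟨u, hu.2⟩)
  refine ⟨c, hc, fun v hv => ?_⟩
  rcases eq_or_ne v 0 with rfl | hv0
  · simp
  have hnorm : 0 < ‖v‖ := norm_pos_iff.mpr hv0
  have hunit := hcK (‖v‖⁻¹ • v)
    ⟨hDcone v hv _ (inv_nonneg.mpr hnorm.le), by simp [norm_smul, hnorm.ne']⟩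
  rw [map_smul, smul_eq_mul, le_inv_mul_iff₀ hnorm] at hunit
  linarith

theorem inf_pos_on_cone_general (A : Type*) [AddCommGroup A] [AddGroup.FG A]
    (V : Type*) [NormedAddCommGroup V] [NormedSpace ℝ V]
    (ι : A →ₗ[ℤ] V) (hbc : IsBaseChange ℝ ι)
    (C : AddSubmonoid A)
    (D : Set V) (hDclosed : IsClosed D)
    (hDcone : ∀ v ∈ D, ∀ r : ℝ, 0 ≤ r → r • v ∈ D)
    (hCD : ∀ a ∈ C, ι a ∈ D)
    (ω : V →ₗ[ℝ] ℝ) (hωpos : ∀ v ∈ D, 0 ≤ ω v)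
    (hωker : ∀ v ∈ D, ω v = 0 → v = 0) :
    ∃ ε : ℝ, 0 < ε ∧ ∀ x ∈ C, ¬(x ∈ C ∧ -x ∈ C) → ε ≤ ω (ι x) := by
  have := hbc.finiteDimensional
  obtain ⟨r, hr, hr_le⟩ := hbc.exists_pos_le_norm
  obtain ⟨c, hc, hc_le⟩ := exists_pos_mul_norm_le_of_isClosed_cone hDclosed hDcone ω
    fun v hv hv0 => (hωpos v hv).lt_of_ne' (mt (hωker v hv) hv0)
  refine ⟨c * r, mul_pos hc hr, fun x hxC hxZ => ?_⟩
  have hx : ι x ≠ 0 := fun hx0 => hxZ ⟨hxC, C.neg_mem_of_isOfFinAddOrder hxC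
    (hbc.isOfFinAddOrder_of_eq_zero hx0)⟩
  calc c * r ≤ c * ‖ι x‖ := mul_le_mul_of_nonneg_left (hr_le x hx) hc.le
    _ ≤ ω (ι x) := hc_le _ (hCD x hxC)

/-- For a strongly strict submonoid `C` of a finitely generated
abelian group `A`, with `Z = C ∩ (−C)`, a closed pointed convex cone
`D ⊆ A ⊗ ℝ` containing `ι_ℝ(C)` and a separating linear form `ω`,
the infimum of `ω(ι_ℝ(x))` over `x ∈ C \ Z` is strictly positive. -/
theorem inf_pos_on_cone (A : Type*) [AddCommGroup A] [AddGroup.FG A]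
    (V : Type*) [NormedAddCommGroup V] [NormedSpace ℝ V]
    (ι : A →ₗ[ℤ] V) (hbc : IsBaseChange ℝ ι)
    (C : AddSubmonoid A)
    (D : Set V) (hDclosed : IsClosed D) (hDconv : Convex ℝ D)
    (hDcone : ∀ v ∈ D, ∀ r : ℝ, 0 ≤ r → r • v ∈ D)
    (hDpointed : ∀ v ∈ D, -v ∈ D → v = 0)
    (hCD : ∀ a ∈ C, ι a ∈ D)
    (ω : V →ₗ[ℝ] ℝ) (hωpos : ∀ v ∈ D, 0 ≤ ω v)
    (hωker : ∀ v ∈ D, ω v = 0 → v = 0) :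
    ∃ ε : ℝ, 0 < ε ∧ ∀ x ∈ C, ¬(x ∈ C ∧ -x ∈ C) → ε ≤ ω (ι x) :=
  inf_pos_on_cone_general A V ι hbc C D hDclosed hDcone hCD ω hωpos hωker
end

section
/- Let (A,C) be a preordered abelian group, Z the subgroup of quasi-zero elements of C, A' = A/Z, C' = C/Z, and q: A → A' the quotient map. Then: (1) for any multifiltration F on a finite dimensional vector space E indexed by (A,C), F = Res^q(Ind_q(F)); (2) for any multifiltration F indexed by (A',C'), F = Ind_q(Res^q(F)). -/
section MultifiltrationDefs

variable {A : Type*} [AddCommGroup A]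

/-- The up-closure `K̃ = {λ | ∃ μ ∈ K, μ ≤ λ}` of a subset with respect to the
preorder defined by the submonoid `C`. -/
def mfTilde (C : AddSubmonoid A) (K : Set A) : Set A := {l : A | ∃ m ∈ K, l - m ∈ C}

variable {k E : Type*} [Field k] [AddCommGroup E] [Module k E]

/-- `F` is a decreasing multifiltration indexed by `(A, C)`. -/
def mfIsFilt (C : AddSubmonoid A) (F : A → Submodule k E) : Prop :=
  ∀ l m : A, m - l ∈ C → F m ≤ F l

/-- Exhaustive: `E = Σ_λ F^λ E`. -/
def mfExhaustive (F : A → Submodule k E) : Prop := (⨆ l, F l) = ⊤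

/-- `F^K E = Σ_{λ ∈ K} F^λ E`. -/
def mfPiece (F : A → Submodule k E) (K : Set A) : Submodule k E := ⨆ l ∈ K, F l

/-- Separated: for each family of subsets whose up-closures have empty
intersection, the intersection of the corresponding pieces is zero. -/
def mfSeparated (C : AddSubmonoid A) (F : A → Submodule k E) : Prop :=
  ∀ 𝒦 : Set (Set A), (⋂ K ∈ 𝒦, mfTilde C K) = ∅ → (⨅ K ∈ 𝒦, mfPiece F K) = ⊥

/-- Chain-separated: every infinite strictly increasing chain `λ₁ < λ₂ < ⋯`
(`λ < μ` meaning `μ - λ ∈ C` and `λ - μ ∉ C`) eventually has `F^{λᵢ} E = 0`. -/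
def mfChainSeparated (C : AddSubmonoid A) (F : A → Submodule k E) : Prop :=
  ∀ l : ℕ → A, (∀ i, l (i + 1) - l i ∈ C ∧ l i - l (i + 1) ∉ C) →
    ∃ i₀ : ℕ, ∀ i ≥ i₀, F (l i) = ⊥

/-- Regular: `F^{K₁}E ∩ F^{K₂}E = F^{K̃₁ ∩ K̃₂}E` for all subsets `K₁, K₂`. -/
def mfRegular (C : AddSubmonoid A) (F : A → Submodule k E) : Prop :=
  ∀ K₁ K₂ : Set A, mfPiece F K₁ ⊓ mfPiece F K₂ = mfPiece F (mfTilde C K₁ ∩ mfTilde C K₂)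

/-- `λ` is a jump point: `F^λ E` strictly contains `Σ_{μ > λ} F^μ E`. -/
def mfJump (C : AddSubmonoid A) (F : A → Submodule k E) (l : A) : Prop :=
  ¬ F l ≤ ⨆ (m : A) (_ : m - l ∈ C ∧ l - m ∉ C), F m

end MultifiltrationDefs

section IndRes

variable {A A' : Type*} [AddCommGroup A] [AddCommGroup A']
  {k E : Type*} [Field k] [AddCommGroup E] [Module k E]

/-- The induced multifiltration `Ind_φ(F)^λ E = Σ_{μ : λ ≤ φ(μ)} F^μ E`. -/
def mfInd (C' : AddSubmonoid A') (φ : A →+ A') (F : A → Submodule k E) :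
    A' → Submodule k E :=
  fun l => ⨆ (m : A) (_ : φ m - l ∈ C'), F m

/-- The restricted multifiltration `Res^φ(F)^λ E = F^{φ(λ)} E`. -/
def mfRes (φ : A →+ A') (F : A' → Submodule k E) : A → Submodule k E := fun l => F (φ l)

end IndRes

/-!
The kernel `Z` of `q` lies in `C`, so `q μ ≥ q λ` in `A/Z` already forces `μ ≥ λ` in `A`:
every summand of `Ind_q(F)^{q λ}` lies in `F^λ`. Conversely, since `q` is surjective, every
`F^{λ'}` occurs as a summand of `Ind_q(Res^q F)^{λ'}`, and the other summands lie in it.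
-/

section InducedRestricted

variable {A A' : Type*} [AddCommGroup A] [AddCommGroup A']
  {k E : Type*} [Field k] [AddCommGroup E] [Module k E]

theorem AddSubmonoid.mem_of_map_mem_map {C : AddSubmonoid A} {φ : A →+ A'}
    (hker : φ.ker.toAddSubmonoid ≤ C) {a : A} (ha : φ a ∈ C.map φ) : a ∈ C := by
  obtain ⟨c, hc, hca⟩ := ha
  have hac : a - c ∈ φ.ker := by simp [AddMonoidHom.mem_ker, hca]
  simpa using C.add_mem (hker hac) hc

theorem mfRes_mfInd_of_ker_le {C : AddSubmonoid A} {φ : A →+ A'}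
    (hker : φ.ker.toAddSubmonoid ≤ C) {F : A → Submodule k E} (hF : mfIsFilt C F) :
    mfRes φ (mfInd (C.map φ) φ F) = F := by
  funext l
  refine le_antisymm (iSup₂_le fun m hm => hF l m ?_) (le_iSup₂_of_le l ?_ le_rfl)
  · exact AddSubmonoid.mem_of_map_mem_map hker (by rwa [map_sub])
  · simp

theorem mfInd_mfRes_of_surjective {C' : AddSubmonoid A'} {φ : A →+ A'}
    (hφ : Function.Surjective φ) {F : A' → Submodule k E} (hF : mfIsFilt C' F) :
    mfInd C' φ (mfRes φ F) = F := by
  funext l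
  obtain ⟨m, rfl⟩ := hφ l
  exact le_antisymm (iSup₂_le fun m' hm' => hF _ _ hm')
    (le_iSup₂_of_le m (by simp) le_rfl)

end InducedRestricted

theorem res_ind_quotient_general {k : Type*} [Field k] {A : Type*} [AddCommGroup A]
    (C : AddSubmonoid A) (Z : AddSubgroup A)
    (hZ : (Z : Set A) = {a : A | a ∈ C ∧ -a ∈ C})
    {E : Type*} [AddCommGroup E] [Module k E] :
    (∀ F : A → Submodule k E, mfIsFilt C F →
      ∀ l : A, F l =
        mfRes (QuotientAddGroup.mk' Z)
          (mfInd (AddSubmonoid.map (QuotientAddGroup.mk' Z) C)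
            (QuotientAddGroup.mk' Z) F) l) ∧
    (∀ F : A ⧸ Z → Submodule k E,
      mfIsFilt (AddSubmonoid.map (QuotientAddGroup.mk' Z) C) F →
      ∀ l : A ⧸ Z, F l =
        mfInd (AddSubmonoid.map (QuotientAddGroup.mk' Z) C)
          (QuotientAddGroup.mk' Z) (mfRes (QuotientAddGroup.mk' Z) F) l) := by
  have hker : (QuotientAddGroup.mk' Z).ker.toAddSubmonoid ≤ C := by
    intro z hz
    rw [AddSubgroup.mem_toAddSubmonoid, QuotientAddGroup.ker_mk'] at hz
    exact (hZ ▸ hz : z ∈ {a : A | a ∈ C ∧ -a ∈ C}).1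
  refine ⟨fun F hF l => ?_, fun F hF l => ?_⟩
  · rw [mfRes_mfInd_of_ker_le hker hF]
  · rw [mfInd_mfRes_of_surjective (QuotientAddGroup.mk'_surjective Z) hF]

/-- With `Z = C ∩ (−C)` and `q : A → A/Z` the quotient map:
(1) `F = Res^q (Ind_q F)` for every multifiltration `F` indexed by `(A, C)`;
(2) `F = Ind_q (Res^q F)` for every multifiltration indexed by `(A/Z, C/Z)`. -/
theorem res_ind_quotient {k : Type*} [Field k] {A : Type*} [AddCommGroup A]
    (C : AddSubmonoid A) (Z : AddSubgroup A)
    (hZ : (Z : Set A) = {a : A | a ∈ C ∧ -a ∈ C})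
    {E : Type*} [AddCommGroup E] [Module k E] [FiniteDimensional k E] :
    (∀ F : A → Submodule k E, mfIsFilt C F →
      ∀ l : A, F l =
        mfRes (QuotientAddGroup.mk' Z)
          (mfInd (AddSubmonoid.map (QuotientAddGroup.mk' Z) C)
            (QuotientAddGroup.mk' Z) F) l) ∧
    (∀ F : A ⧸ Z → Submodule k E,
      mfIsFilt (AddSubmonoid.map (QuotientAddGroup.mk' Z) C) F →
      ∀ l : A ⧸ Z, F l =
        mfInd (AddSubmonoid.map (QuotientAddGroup.mk' Z) C)
          (QuotientAddGroup.mk' Z) (mfRes (QuotientAddGroup.mk' Z) F) l) :=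
  res_ind_quotient_general C Z hZ
end

section
/- Let A be a finitely generated abelian group, C ⊆ A a submonoid with quasi-zero subgroup Z such that C/Z is a strongly strict submonoid of A/Z. Let (E,F) be a multifiltration on a finite dimensional vector space E indexed by (A,C). If F is separated, then F is chain-separated. -/
/-! An upper bound `a` of a strictly increasing chain `l₀ < l₁ < ⋯` would place every
`ι (a - lᵢ)` in the set `D ∩ (ι (a - l₀) - D)`, which is bounded because `D` is a closed
salient cone. Modulo torsion, `A ⧸ Z` is a lattice in `V`, so it meets this bounded set in finitely
many points: some `l_q - l_p` with `p < q` is torsion modulo `Z = C ∩ -C`, which forces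
`l_p - l_q ∈ C`. Hence the up-closures of the `lᵢ` have empty intersection, separatedness gives
`⋂ F^{lᵢ} = 0`, and the decreasing chain `F^{lᵢ}` of subspaces stabilises, necessarily at `0`. -/

theorem AddSubmonoid.neg_mem_of_neg_nsmul_mem {A : Type*} [AddCommGroup A] (C : AddSubmonoid A)
    {x : A} (hx : x ∈ C) {n : ℕ} (hn : 0 < n) (hnx : -(n • x) ∈ C) : -x ∈ C := by
  obtain ⟨m, rfl⟩ := Nat.exists_eq_add_one_of_ne_zero hn.ne'
  have : -x = m • x + -((m + 1) • x) := by rw [succ_nsmul]; abel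
  rw [this]
  exact C.add_mem (C.nsmul_mem hx m) hnx

theorem AddSubmonoid.sub_mem_of_forall_succ_sub_mem {A : Type*} [AddCommGroup A]
    (C : AddSubmonoid A) {l : ℕ → A} (hl : ∀ i, l (i + 1) - l i ∈ C) {i j : ℕ} (hij : i ≤ j) :
    l j - l i ∈ C := by
  induction j, hij using Nat.le_induction with
  | base => simp
  | succ j _ ih => simpa using C.add_mem (hl j) ih

theorem Antitone.eventually_eq_bot_of_iInf_eq_bot {α : Type*} [CompleteLattice α]
    [WellFoundedLT α] {f : ℕ → α} (hf : Antitone f) (hinf : ⨅ i, f i = ⊥) :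
    ∃ n, ∀ m ≥ n, f m = ⊥ := by
  obtain ⟨n, hn⟩ := WellFoundedLT.antitone_chain_condition hf
  have hbot : f n = ⊥ := by
    refine eq_bot_iff.mpr (hinf ▸ le_iInf fun i => ?_)
    rcases le_total i n with h | h
    · exact hf h
    · exact (hn i h).le
  exact ⟨n, fun m hm => (hn m hm).symm.trans hbot⟩

theorem exists_forall_norm_le_of_mem_of_sub_mem {V : Type*} [NormedAddCommGroup V]
    [NormedSpace ℝ V] [FiniteDimensional ℝ V] {D : Set V} (hDclosed : IsClosed D)
    (hDcone : ∀ v ∈ D, ∀ r : ℝ, 0 ≤ r → r • v ∈ D) (hDpointed : ∀ v ∈ D, -v ∈ D → v = 0)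
    (w : V) : ∃ R : ℝ, ∀ x ∈ D, w - x ∈ D → ‖x‖ ≤ R := by
  have hdisj : Disjoint (Metric.sphere 0 1 ∩ D) (-D) := by
    refine Set.disjoint_left.mpr fun y ⟨hy, hyD⟩ hyD' => ?_
    rw [hDpointed y hyD hyD'] at hy
    simp at hy
  obtain ⟨r, hr, hsep⟩ := Metric.exists_pos_forall_lt_edist
    ((isCompact_sphere 0 1).inter_right hDclosed) hDclosed.neg hdisj
  refine ⟨‖w‖ / r, fun x hx hwx => ?_⟩
  rcases eq_or_ne x 0 with rfl | hx0
  · simp only [norm_zero]; positivity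
  have ht : 0 < ‖x‖ := norm_pos_iff.mpr hx0
  -- rescaling `x` and `x - w ∈ -D` to the unit sphere brings them within `‖w‖ / ‖x‖` of each other
  have hlt := hsep (‖x‖⁻¹ • x) ⟨by simp [norm_smul, ht.ne'], hDcone _ hx _ (by positivity)⟩
    (‖x‖⁻¹ • (x - w))
    (by simpa [Set.mem_neg, ← smul_neg] using hDcone _ hwx _ (inv_nonneg.mpr ht.le))
  rw [edist_nndist, ENNReal.coe_lt_coe, ← NNReal.coe_lt_coe, coe_nndist, dist_eq_norm, ← smul_sub,
    sub_sub_cancel, norm_smul, norm_inv, norm_norm, inv_mul_eq_div] at hlt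
  exact ((lt_div_comm₀ (NNReal.coe_pos.mpr hr) ht).mp hlt).le

theorem IsBaseChange.finite_image_mkQ_torsion {M V : Type*} [AddCommGroup M]
    [Module.Finite ℤ M] [NormedAddCommGroup V] [NormedSpace ℝ V] {ι : M →ₗ[ℤ] V}
    (hι : IsBaseChange ℝ ι) (R : ℝ) :
    ((Submodule.torsion ℤ M).mkQ '' {x | ‖ι x‖ ≤ R}).Finite := by
  have : FiniteDimensional ℝ V := Module.Finite.equiv hι.equiv
  set T := Submodule.torsion ℤ M
  let b := Module.Free.chooseBasis ℤ (M ⧸ T)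
  -- the coordinates of `M ⧸ T` extend to continuous functionals on `V`
  let c : _ → V →L[ℝ] ℝ := fun j =>
    LinearMap.toContinuousLinearMap (hι.lift ((Algebra.linearMap ℤ ℝ) ∘ₗ b.coord j ∘ₗ T.mkQ))
  have hc : ∀ j x, c j (ι x) = b.coord j (T.mkQ x) := fun j x => hι.lift_eq _ x
  let N : _ → ℤ := fun j => ⌈‖c j‖ * R⌉
  refine ((Set.Finite.pi fun j => Set.finite_Icc (-N j) (N j)).preimage
    b.equivFun.injective.injOn).subset ?_
  rintro _ ⟨x, hx, rfl⟩ j -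
  have hbound : |(b.coord j (T.mkQ x) : ℝ)| ≤ N j :=
    calc |(b.coord j (T.mkQ x) : ℝ)| = ‖c j (ι x)‖ := by rw [hc, Real.norm_eq_abs]
      _ ≤ ‖c j‖ * ‖ι x‖ := (c j).le_opNorm _
      _ ≤ ‖c j‖ * R := by gcongr; exact hx
      _ ≤ N j := Int.le_ceil _
  exact abs_le.mp (by exact_mod_cast hbound)

theorem neg_mem_of_isOfFinAddOrder_mk {A : Type*} [AddCommGroup A] {C : AddSubmonoid A}
    {Z : AddSubgroup A} (hZ : (Z : Set A) = {a : A | a ∈ C ∧ -a ∈ C}) {x : A} (hx : x ∈ C)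
    (hfin : IsOfFinAddOrder (QuotientAddGroup.mk' Z x)) : -x ∈ C := by
  obtain ⟨n, hn, hnx⟩ := hfin.exists_nsmul_eq_zero
  have hnZ : n • x ∈ (Z : Set A) := by
    rwa [← map_nsmul, QuotientAddGroup.mk'_apply, QuotientAddGroup.eq_zero_iff] at hnx
  rw [hZ] at hnZ
  exact C.neg_mem_of_neg_nsmul_mem hx hn hnZ.2

theorem not_forall_sub_mem_of_strictMono_chain {A : Type*} [AddCommGroup A] [AddGroup.FG A]
    {C : AddSubmonoid A} {Z : AddSubgroup A} {V : Type*} [NormedAddCommGroup V]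
    [NormedSpace ℝ V] {ι : (A ⧸ Z) →ₗ[ℤ] V} {D : Set V}
    (hZ : (Z : Set A) = {a : A | a ∈ C ∧ -a ∈ C}) (hbc : IsBaseChange ℝ ι)
    (hDclosed : IsClosed D) (hDcone : ∀ v ∈ D, ∀ r : ℝ, 0 ≤ r → r • v ∈ D)
    (hDpointed : ∀ v ∈ D, -v ∈ D → v = 0) (hCD : ∀ a ∈ C, ι (QuotientAddGroup.mk' Z a) ∈ D)
    {l : ℕ → A} (hl : ∀ i, l (i + 1) - l i ∈ C ∧ l i - l (i + 1) ∉ C) (a : A) :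
    ¬ ∀ i, a - l i ∈ C := by
  intro ha
  have : Module.Finite ℤ (A ⧸ Z) := Module.Finite.iff_addGroup_fg.mpr inferInstance
  have : FiniteDimensional ℝ V := Module.Finite.equiv hbc.equiv
  set π := QuotientAddGroup.mk' Z
  have hle : ∀ {i j}, i ≤ j → l j - l i ∈ C := C.sub_mem_of_forall_succ_sub_mem fun i => (hl i).1
  obtain ⟨R, hR⟩ := exists_forall_norm_le_of_mem_of_sub_mem hDclosed hDcone hDpointed
    (ι (π (a - l 0)))
  have hbdd : ∀ i, ‖ι (π (a - l i))‖ ≤ R := fun i => hR _ (hCD _ (ha i)) (by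
    rw [← map_sub, ← map_sub, sub_sub_sub_cancel_left]
    exact hCD _ (hle (Nat.zero_le i)))
  obtain ⟨p, q, hpq, heq⟩ := (hbc.finite_image_mkQ_torsion R).exists_lt_map_eq_of_forall_mem
    (f := fun i => (Submodule.torsion ℤ (A ⧸ Z)).mkQ (π (a - l i)))
    fun i => Set.mem_image_of_mem _ (hbdd i)
  have htors : IsOfFinAddOrder (π (l q - l p)) := by
    have := (Submodule.Quotient.eq _).mp heq
    rwa [← map_sub, sub_sub_sub_cancel_left, ← Submodule.mem_toAddSubgroup,
      Submodule.torsion_int] at this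
  have hqp := neg_mem_of_isOfFinAddOrder_mk hZ (hle hpq.le) htors
  rw [neg_sub] at hqp
  exact (hl p).2 (by simpa using C.add_mem hqp (hle hpq))

theorem mfSeparated.iInf_eq_bot {A k E ι : Type*} [AddCommGroup A] [Field k] [AddCommGroup E]
    [Module k E] {C : AddSubmonoid A} {F : A → Submodule k E} (hsep : mfSeparated C F)
    {l : ι → A} (hl : ∀ a, ¬ ∀ i, a - l i ∈ C) : ⨅ i, F (l i) = ⊥ := by
  have hempty : ⋂ K ∈ Set.range fun i => ({l i} : Set A), mfTilde C K = ∅ := by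
    simpa [Set.biInter_range, mfTilde, Set.eq_empty_iff_forall_notMem] using hl
  simpa only [iInf_range, mfPiece, iSup_singleton] using hsep _ hempty

theorem separated_implies_chainSeparated_general {k : Type*} [Field k] {A : Type*}
    [AddCommGroup A] [AddGroup.FG A]
    (C : AddSubmonoid A) (Z : AddSubgroup A)
    (hZ : (Z : Set A) = {a : A | a ∈ C ∧ -a ∈ C})
    (V : Type*) [NormedAddCommGroup V] [NormedSpace ℝ V]
    (ι : (A ⧸ Z) →ₗ[ℤ] V) (hbc : IsBaseChange ℝ ι)
    (D : Set V) (hDclosed : IsClosed D)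
    (hDcone : ∀ v ∈ D, ∀ r : ℝ, 0 ≤ r → r • v ∈ D)
    (hDpointed : ∀ v ∈ D, -v ∈ D → v = 0)
    (hCD : ∀ a ∈ C, ι (QuotientAddGroup.mk' Z a) ∈ D)
    {E : Type*} [AddCommGroup E] [Module k E] [FiniteDimensional k E]
    (F : A → Submodule k E) (hF : mfIsFilt C F) (hsep : mfSeparated C F) :
    mfChainSeparated C F := by
  intro l hl
  have hanti : Antitone (F ∘ l) := fun i j hij =>
    hF _ _ (C.sub_mem_of_forall_succ_sub_mem (fun i => (hl i).1) hij)
  exact hanti.eventually_eq_bot_of_iInf_eq_bot <| hsep.iInf_eq_bot <|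
    not_forall_sub_mem_of_strictMono_chain hZ hbc hDclosed hDcone hDpointed hCD hl

/-- If `C/Z` is a strongly strict submonoid of `A/Z` (witnessed by
a closed pointed convex cone `D ⊆ (A/Z) ⊗ ℝ`), then every separated
multifiltration on a finite dimensional vector space indexed by `(A, C)` is
chain-separated. -/
theorem separated_implies_chainSeparated {k : Type*} [Field k] {A : Type*}
    [AddCommGroup A] [AddGroup.FG A]
    (C : AddSubmonoid A) (Z : AddSubgroup A)
    (hZ : (Z : Set A) = {a : A | a ∈ C ∧ -a ∈ C})
    (V : Type*) [NormedAddCommGroup V] [NormedSpace ℝ V]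
    (ι : (A ⧸ Z) →ₗ[ℤ] V) (hbc : IsBaseChange ℝ ι)
    (D : Set V) (hDclosed : IsClosed D) (hDconv : Convex ℝ D)
    (hDcone : ∀ v ∈ D, ∀ r : ℝ, 0 ≤ r → r • v ∈ D)
    (hDpointed : ∀ v ∈ D, -v ∈ D → v = 0)
    (hCD : ∀ a ∈ C, ι (QuotientAddGroup.mk' Z a) ∈ D)
    {E : Type*} [AddCommGroup E] [Module k E] [FiniteDimensional k E]
    (F : A → Submodule k E) (hF : mfIsFilt C F) (hsep : mfSeparated C F) :
    mfChainSeparated C F :=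
  separated_implies_chainSeparated_general C Z hZ V ι hbc D hDclosed hDcone hDpointed hCD F hF hsep
end

section
/- Let φ: (A,C) → (A',C') be a morphism of preordered finitely generated abelian groups, and (E,F) a multifiltered vector space indexed by (A,C). If F is separated, then Ind_φ(F) is separated. -/
/-! The pieces of `Ind_φ(F)` are pieces of `F`: `Ind_φ(F)^K E = F^{φ⁻¹(K̃)} E`. Since `φ` is
monotone, the up-closure of `φ⁻¹(K̃)` still lies in `φ⁻¹(K̃)`, so a point in the intersection of
the up-closures `(φ⁻¹(K̃))~` would map into `⋂ K̃ = ∅`. Separatedness of `F` then applies to the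
family `{φ⁻¹(K̃)}`. -/

section

variable {A A' : Type*} [AddCommGroup A] [AddCommGroup A']

theorem mfTilde_mfTilde_subset (C : AddSubmonoid A) (K : Set A) :
    mfTilde C (mfTilde C K) ⊆ mfTilde C K := by
  rintro l ⟨m, ⟨n, hn, hmn⟩, hlm⟩
  exact ⟨n, hn, by simpa only [sub_add_sub_cancel] using C.add_mem hlm hmn⟩

theorem mfTilde_preimage_subset {C : AddSubmonoid A} {C' : AddSubmonoid A'} {φ : A →+ A'}
    (hφ : ∀ a ∈ C, φ a ∈ C') (S : Set A') : mfTilde C (φ ⁻¹' S) ⊆ φ ⁻¹' mfTilde C' S := by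
  rintro l ⟨m, hm, hlm⟩
  exact ⟨φ m, hm, by simpa only [map_sub] using hφ _ hlm⟩

theorem mfTilde_preimage_mfTilde_subset {C : AddSubmonoid A} {C' : AddSubmonoid A'}
    {φ : A →+ A'} (hφ : ∀ a ∈ C, φ a ∈ C') (K : Set A') :
    mfTilde C (φ ⁻¹' mfTilde C' K) ⊆ φ ⁻¹' mfTilde C' K :=
  (mfTilde_preimage_subset hφ _).trans (Set.preimage_mono (mfTilde_mfTilde_subset C' K))

variable {k E : Type*} [Field k] [AddCommGroup E] [Module k E]

theorem mfPiece_mfInd (C' : AddSubmonoid A') (φ : A →+ A') (F : A → Submodule k E)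
    (K : Set A') : mfPiece (mfInd C' φ F) K = mfPiece F (φ ⁻¹' mfTilde C' K) := by
  apply le_antisymm
  · refine iSup₂_le fun l hl => iSup₂_le fun m hm => ?_
    exact le_iSup₂ (f := fun m (_ : m ∈ φ ⁻¹' mfTilde C' K) => F m) m ⟨l, hl, hm⟩
  · refine iSup₂_le fun m ⟨l, hl, hm⟩ => ?_
    calc F m ≤ mfInd C' φ F l := le_iSup₂ (f := fun m (_ : φ m - l ∈ C') => F m) m hm
      _ ≤ mfPiece (mfInd C' φ F) K := le_iSup₂ (f := fun l (_ : l ∈ K) => mfInd C' φ F l) l hl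

end

theorem ind_separated_general {k : Type*} [Field k] {A A' : Type*} [AddCommGroup A]
    [AddCommGroup A']
    (C : AddSubmonoid A) (C' : AddSubmonoid A') (φ : A →+ A')
    (hφ : ∀ a ∈ C, φ a ∈ C')
    {E : Type*} [AddCommGroup E] [Module k E]
    (F : A → Submodule k E) (hsep : mfSeparated C F) :
    mfSeparated C' (mfInd C' φ F) := by
  intro 𝒦 h𝒦
  have hempty : ⋂ K ∈ (fun K => φ ⁻¹' mfTilde C' K) '' 𝒦, mfTilde C K = ∅ := by
    rw [Set.biInter_image]
    refine Set.eq_empty_of_forall_notMem fun x hx => ?_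
    have hφx : φ x ∈ ⋂ K ∈ 𝒦, mfTilde C' K := Set.mem_iInter₂.2 fun K hK =>
      mfTilde_preimage_mfTilde_subset hφ K (Set.mem_iInter₂.1 hx K hK)
    rw [h𝒦] at hφx
    exact hφx
  simpa only [iInf_image, mfPiece_mfInd] using hsep _ hempty

/-- `Ind_φ` preserves separatedness. -/
theorem ind_separated {k : Type*} [Field k] {A A' : Type*} [AddCommGroup A]
    [AddCommGroup A'] [AddGroup.FG A] [AddGroup.FG A']
    (C : AddSubmonoid A) (C' : AddSubmonoid A') (φ : A →+ A')
    (hφ : ∀ a ∈ C, φ a ∈ C')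
    {E : Type*} [AddCommGroup E] [Module k E]
    (F : A → Submodule k E) (hF : mfIsFilt C F) (hsep : mfSeparated C F) :
    mfSeparated C' (mfInd C' φ F) :=
  ind_separated_general C C' φ hφ F hsep
end

section
/- Let φ: (A,C) → (A',C') be a morphism of preordered finitely generated abelian groups with φ surjective and C = φ⁻¹(C'). If (E,F) is a multifiltered vector space indexed by (A',C') and F is separated, then Res^φ(F) is separated. -/
section Restriction

variable {A A' : Type*} [AddCommGroup A] [AddCommGroup A']

theorem preimage_mfTilde_image {C : AddSubmonoid A} {C' : AddSubmonoid A'} {φ : A →+ A'}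
    (hC : ∀ a : A, a ∈ C ↔ φ a ∈ C') (K : Set A) :
    φ ⁻¹' mfTilde C' (φ '' K) = mfTilde C K := by
  ext l
  simp only [mfTilde, Set.mem_preimage, Set.mem_ofPred_eq, Set.exists_mem_image, hC, map_sub]

variable {k E : Type*} [Field k] [AddCommGroup E] [Module k E]

theorem mfPiece_mfRes (φ : A →+ A') (F : A' → Submodule k E) (K : Set A) :
    mfPiece (mfRes φ F) K = mfPiece F (φ '' K) := by
  simp only [mfPiece, mfRes, iSup_image]

end Restriction

theorem res_separated_general {k : Type*} [Field k] {A A' : Type*} [AddCommGroup A]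
    [AddCommGroup A']
    (C : AddSubmonoid A) (C' : AddSubmonoid A') (φ : A →+ A')
    (hsurj : Function.Surjective φ) (hC : ∀ a : A, a ∈ C ↔ φ a ∈ C')
    {E : Type*} [AddCommGroup E] [Module k E]
    (F : A' → Submodule k E) (hsep : mfSeparated C' F) :
    mfSeparated C (mfRes φ F) := by
  intro 𝒦 h𝒦
  have hempty : (⋂ K' ∈ Set.image φ '' 𝒦, mfTilde C' K') = ∅ := by
    apply hsurj.preimage_injective
    simpa only [Set.biInter_image, Set.preimage_iInter₂, preimage_mfTilde_image hC,
      Set.preimage_empty] using h𝒦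
  simpa only [iInf_image, mfPiece_mfRes] using hsep _ hempty

/-- If `φ` is surjective and `C = φ⁻¹(C')`, then `Res^φ`
preserves separatedness. -/
theorem res_separated {k : Type*} [Field k] {A A' : Type*} [AddCommGroup A]
    [AddCommGroup A'] [AddGroup.FG A] [AddGroup.FG A']
    (C : AddSubmonoid A) (C' : AddSubmonoid A') (φ : A →+ A')
    (hsurj : Function.Surjective φ) (hC : ∀ a : A, a ∈ C ↔ φ a ∈ C')
    {E : Type*} [AddCommGroup E] [Module k E]
    (F : A' → Submodule k E) (hF : mfIsFilt C' F) (hsep : mfSeparated C' F) :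
    mfSeparated C (mfRes φ F) :=
  res_separated_general C C' φ hsurj hC F hsep
end

section
/- Let (A,C) be a preordered finitely generated abelian group with C a generating cone, E a finite dimensional vector space with an exhaustive, chain-separated, decreasing multifiltration F indexed by (A,C), S ⊆ E a subspace and Q = E/S. Then the induced multifiltrations on S (F^λS = S ∩ F^λE) and on Q (F^λQ = F^λE/(F^λE ∩ S)) are exhaustive and chain-separated. Furthermore, if F is separated, the induced multifiltrations on S and Q are separated. -/
/-! Exhaustiveness and chain-separation pass to `S` and `E/S` formally, once a generating cone
is seen to make `F` directed. Separatedness of `E/S` is proved by killing one line `k s₀` at a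
time. Let `x ≠ 0` lie in every `F^K(E/ks₀)`, `K ∈ 𝒦`, and lift it to `e_K ∈ F^K E`. Separatedness
of `F`, applied to `s₀` and the sets `K ∪ K'` with `s₀ ∈ F^K E + F^{K'} E`, gives a point `ν₁` in
all their up-closures; `ν₁` misses `K̃_s` for some `K_s ∈ 𝒦`. Every `K ∈ 𝒦` then has `ν₁ ∈ K̃` or
`e_{K_s} ∈ F^K E`, because `e_K - e_{K_s} ∈ k s₀`. Separatedness applied to `e_{K_s}` gives a
point `ν₂` in the up-closures of the second kind, and a common upper bound of `ν₁` and `ν₂` lies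
in every `K̃`, `K ∈ 𝒦`. -/

open Submodule Module

section Pieces

variable {A k E Q : Type*} [Field k] [AddCommGroup E] [Module k E] [AddCommGroup Q] [Module k Q]
  {F : A → Submodule k E}

theorem mfPiece_union (K₁ K₂ : Set A) :
    mfPiece F (K₁ ∪ K₂) = mfPiece F K₁ ⊔ mfPiece F K₂ :=
  iSup_union

theorem mfPiece_map (f : E →ₗ[k] Q) (K : Set A) :
    mfPiece (fun l => (F l).map f) K = (mfPiece F K).map f := by
  simp only [mfPiece, Submodule.map_iSup]

theorem mfPiece_comap_le (f : Q →ₗ[k] E) (K : Set A) :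
    mfPiece (fun l => (F l).comap f) K ≤ (mfPiece F K).comap f :=
  iSup₂_le fun l hl => comap_mono (le_iSup₂ (f := fun l (_ : l ∈ K) => F l) l hl)

theorem mfExhaustive.map (hex : mfExhaustive F) {f : E →ₗ[k] Q} (hf : Function.Surjective f) :
    mfExhaustive (fun l => (F l).map f) := by
  rw [mfExhaustive, ← Submodule.map_iSup, hex, Submodule.map_top,
    LinearMap.range_eq_top_of_surjective f hf]

end Pieces

section Multifiltration

variable {A : Type*} [AddCommGroup A] {C : AddSubmonoid A}

theorem AddSubmonoid.exists_sub_mem_sub_mem_of_generating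
    (hgen : ∀ a : A, ∃ x ∈ C, ∃ y ∈ C, a = x - y) (a b : A) :
    ∃ c, c - a ∈ C ∧ c - b ∈ C := by
  obtain ⟨x, hx, y, hy, hxy⟩ := hgen (a - b)
  refine ⟨a + y, ?_, ?_⟩
  · rwa [add_sub_cancel_left]
  · rwa [add_sub_right_comm, hxy, sub_add_cancel]

theorem mfTilde_union (K₁ K₂ : Set A) :
    mfTilde C (K₁ ∪ K₂) = mfTilde C K₁ ∪ mfTilde C K₂ := by
  ext l
  simp only [mfTilde, Set.mem_union, Set.mem_ofPred_eq, or_and_right, exists_or]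

theorem mem_mfTilde_of_sub_mem {K : Set A} {ν μ : A} (hν : ν ∈ mfTilde C K) (h : μ - ν ∈ C) :
    μ ∈ mfTilde C K := by
  obtain ⟨m, hm, hνm⟩ := hν
  exact ⟨m, hm, by simpa only [sub_add_sub_cancel] using C.add_mem h hνm⟩

variable {k E Q : Type*} [Field k] [AddCommGroup E] [Module k E] [AddCommGroup Q] [Module k Q]
  {F : A → Submodule k E}

theorem mfIsFilt.directed (hF : mfIsFilt C F) (hC : ∀ a b : A, ∃ c, c - a ∈ C ∧ c - b ∈ C) :
    Directed (· ≤ ·) F := by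
  intro a b
  obtain ⟨c, hca, hcb⟩ := hC (-a) (-b)
  exact ⟨-c, hF _ _ (by rwa [sub_neg_eq_add, add_comm, ← sub_neg_eq_add]),
    hF _ _ (by rwa [sub_neg_eq_add, add_comm, ← sub_neg_eq_add])⟩

theorem mfExhaustive.comap (hdir : Directed (· ≤ ·) F) (hex : mfExhaustive F) (f : Q →ₗ[k] E) :
    mfExhaustive (fun l => (F l).comap f) := by
  have : Nonempty A := ⟨0⟩
  refine eq_top_iff.2 fun q _ => ?_
  have hq : f q ∈ ⨆ l, F l := hex ▸ mem_top
  obtain ⟨l, hl⟩ := (mem_iSup_of_directed F hdir).1 hq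
  exact mem_iSup_of_mem l hl

theorem mfChainSeparated.of_eq_bot {G : A → Submodule k Q} (hcs : mfChainSeparated C F)
    (hG : ∀ l, F l = ⊥ → G l = ⊥) : mfChainSeparated C G := by
  intro l hl
  obtain ⟨i₀, h⟩ := hcs l hl
  exact ⟨i₀, fun i hi => hG _ (h i hi)⟩

theorem mfSeparated.comap (hsep : mfSeparated C F) {f : Q →ₗ[k] E}
    (hf : Function.Injective f) : mfSeparated C (fun l => (F l).comap f) := by
  intro 𝒦 h𝒦
  refine eq_bot_iff.2 fun x hx => ?_
  have hfx : f x ∈ ⨅ K ∈ 𝒦, mfPiece F K := by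
    simp only [mem_iInf] at hx ⊢
    exact fun K hK => mfPiece_comap_le f K (hx K hK)
  rw [hsep 𝒦 h𝒦, mem_bot] at hfx
  exact (mem_bot k).2 (hf (hfx.trans f.map_zero.symm))

theorem mfSeparated.map_of_injective (hsep : mfSeparated C F) {f : E →ₗ[k] Q}
    (hf : Function.Injective f) : mfSeparated C (fun l => (F l).map f) := by
  intro 𝒦 h𝒦
  obtain ⟨K₀, hK₀⟩ : 𝒦.Nonempty := by
    by_contra h
    rw [Set.not_nonempty_iff_eq_empty.1 h] at h𝒦
    simp at h𝒦
  refine eq_bot_iff.2 fun x hx => ?_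
  simp only [mem_iInf, mfPiece_map] at hx
  obtain ⟨y, -, rfl⟩ := hx K₀ hK₀
  have hy : y ∈ ⨅ K ∈ 𝒦, mfPiece F K := by
    simp only [mem_iInf]
    intro K hK
    obtain ⟨y', hy', hyy'⟩ := hx K hK
    exact hf hyy' ▸ hy'
  rw [hsep 𝒦 h𝒦, mem_bot] at hy
  simp [hy]

theorem mfSeparated.exists_mem_mfTilde (hsep : mfSeparated C F) (𝒥 : Set (Set A)) {v : E}
    (hv : ∀ J ∈ 𝒥, v ∈ mfPiece F J) (hv0 : v ≠ 0) : ∃ ν, ∀ J ∈ 𝒥, ν ∈ mfTilde C J := by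
  by_contra! h
  refine hv0 ((mem_bot k).1 ?_)
  rw [← hsep 𝒥 (Set.eq_empty_of_forall_notMem fun ν hν => ?_)]
  · simpa only [mem_iInf] using hv
  · obtain ⟨J, hJ, hνJ⟩ := h ν
    exact hνJ (Set.mem_iInter₂.1 hν J hJ)

theorem mfSeparated.map_mkQ_span_singleton (hC : ∀ a b : A, ∃ c, c - a ∈ C ∧ c - b ∈ C)
    (hsep : mfSeparated C F) {s₀ : E} (hs₀ : s₀ ≠ 0) :
    mfSeparated C (fun l => (F l).map (k ∙ s₀).mkQ) := by
  intro 𝒦 h𝒦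
  have hmiss : ∀ ν, ∃ K ∈ 𝒦, ν ∉ mfTilde C K := fun ν => by
    by_contra! h
    exact Set.notMem_empty ν (h𝒦 ▸ Set.mem_iInter₂.2 h)
  refine eq_bot_iff.2 fun x hx => by_contra fun hx0 => ?_
  simp only [mem_iInf, mfPiece_map] at hx
  choose e he hex using hx
  obtain ⟨ν₁, hν₁⟩ := hsep.exists_mem_mfTilde
    {J | ∃ K ∈ 𝒦, ∃ K' ∈ 𝒦, J = K ∪ K' ∧ s₀ ∈ mfPiece F K ⊔ mfPiece F K'}
    (by rintro J ⟨K, -, K', -, rfl, hs⟩; rwa [mfPiece_union]) hs₀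
  obtain ⟨Ks, hKs, hν₁Ks⟩ := hmiss ν₁
  have dichotomy : ∀ K (hK : K ∈ 𝒦), ν₁ ∈ mfTilde C K ∨ e Ks hKs ∈ mfPiece F K := by
    intro K hK
    by_cases hs : s₀ ∈ mfPiece F K ⊔ mfPiece F Ks
    · have := hν₁ _ ⟨K, hK, Ks, hKs, rfl, hs⟩
      rw [mfTilde_union] at this
      exact .inl (this.resolve_right hν₁Ks)
    · have hspan : e K hK - e Ks hKs ∈ k ∙ s₀ := by
        rw [← ker_mkQ (k ∙ s₀), LinearMap.mem_ker, map_sub, hex, hex, sub_self]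
      have hsup : e K hK - e Ks hKs ∈ mfPiece F K ⊔ mfPiece F Ks :=
        sub_mem (mem_sup_left (he K hK)) (mem_sup_right (he Ks hKs))
      have hzero := (disjoint_span_singleton' hs₀).2 hs |>.le_bot ⟨hsup, hspan⟩
      exact .inr (sub_eq_zero.1 hzero ▸ he K hK)
  have he0 : e Ks hKs ≠ 0 := fun h => hx0 (by rw [← hex Ks hKs, h, map_zero]; exact zero_mem _)
  obtain ⟨ν₂, hν₂⟩ := hsep.exists_mem_mfTilde {J | J ∈ 𝒦 ∧ e Ks hKs ∈ mfPiece F J}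
    (fun J hJ => hJ.2) he0
  obtain ⟨ν, hν₁ν, hν₂ν⟩ := hC ν₁ ν₂
  obtain ⟨K, hK, hνK⟩ := hmiss ν
  rcases dichotomy K hK with h | h
  · exact hνK (mem_mfTilde_of_sub_mem h hν₁ν)
  · exact hνK (mem_mfTilde_of_sub_mem (hν₂ K ⟨hK, h⟩) hν₂ν)

end Multifiltration

theorem finrank_map_mkQ_span_singleton_add_one {k E : Type*} [Field k] [AddCommGroup E]
    [Module k E] {P : Submodule k E} [FiniteDimensional k P] {s : E} (hsP : s ∈ P)
    (hs : s ≠ 0) : finrank k (P.map (k ∙ s).mkQ) + 1 = finrank k P := by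
  have hle : (k ∙ s) ≤ P := (span_singleton_le_iff_mem s P).2 hsP
  set g := (k ∙ s).mkQ ∘ₗ P.subtype
  have hrange : LinearMap.range g = P.map (k ∙ s).mkQ := by
    rw [LinearMap.range_comp, range_subtype]
  have hker : finrank k (LinearMap.ker g) = 1 := by
    rw [LinearMap.ker_comp, ker_mkQ, (comapSubtypeEquivOfLe hle).finrank_eq,
      finrank_span_singleton hs]
  rw [← hrange, ← hker, g.finrank_range_add_finrank_ker]

theorem mfSeparated.map_of_finiteDimensional_ker {A : Type*} [AddCommGroup A]
    {C : AddSubmonoid A} (hC : ∀ a b : A, ∃ c, c - a ∈ C ∧ c - b ∈ C)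
    {k E Q : Type*} [Field k] [AddCommGroup E] [Module k E] [AddCommGroup Q] [Module k Q]
    {F : A → Submodule k E} (hsep : mfSeparated C F) (f : E →ₗ[k] Q)
    [FiniteDimensional k (LinearMap.ker f)] : mfSeparated C (fun l => (F l).map f) := by
  induction hn : finrank k (LinearMap.ker f) generalizing E with
  | zero =>
    exact hsep.map_of_injective (LinearMap.ker_eq_bot.1 (finrank_eq_zero.1 hn))
  | succ n ih =>
    obtain ⟨s₀, hs₀f, hs₀⟩ := (LinearMap.ker f).ne_bot_iff.1 fun h => by
      rw [← finrank_eq_zero] at h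
      omega
    have hle : (k ∙ s₀) ≤ LinearMap.ker f := (span_singleton_le_iff_mem _ _).2 hs₀f
    let f' := (k ∙ s₀).liftQ f hle
    have hker : LinearMap.ker f' = (LinearMap.ker f).map (k ∙ s₀).mkQ := ker_liftQ _ _ _
    have : FiniteDimensional k (LinearMap.ker f') := hker ▸ inferInstance
    have hn' : finrank k (LinearMap.ker f') = n := by
      have := finrank_map_mkQ_span_singleton_add_one hs₀f hs₀
      rw [hker]
      omega
    have := ih (hsep.map_mkQ_span_singleton hC hs₀) f' hn'
    simpa only [← map_comp, f', liftQ_mkQ] using this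

theorem induced_sub_quot_general {k : Type*} [Field k] {A : Type*} [AddCommGroup A]
    (C : AddSubmonoid A)
    (hgen : ∀ a : A, ∃ x ∈ C, ∃ y ∈ C, a = x - y)
    {E : Type*} [AddCommGroup E] [Module k E] [FiniteDimensional k E]
    (F : A → Submodule k E) (hF : mfIsFilt C F)
    (hex : mfExhaustive F) (hcs : mfChainSeparated C F)
    (S : Submodule k E) :
    mfExhaustive (fun l => Submodule.comap S.subtype (F l)) ∧
    mfExhaustive (fun l => Submodule.map S.mkQ (F l)) ∧
    mfChainSeparated C (fun l => Submodule.comap S.subtype (F l)) ∧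
    mfChainSeparated C (fun l => Submodule.map S.mkQ (F l)) ∧
    (mfSeparated C F →
      mfSeparated C (fun l => Submodule.comap S.subtype (F l)) ∧
      mfSeparated C (fun l => Submodule.map S.mkQ (F l))) := by
  have hC := AddSubmonoid.exists_sub_mem_sub_mem_of_generating hgen
  have : FiniteDimensional k (LinearMap.ker S.mkQ) := by rw [ker_mkQ]; infer_instance
  refine ⟨hex.comap (hF.directed hC) S.subtype, hex.map S.mkQ_surjective,
    hcs.of_eq_bot fun l h => by rw [h, comap_bot, ker_subtype],
    hcs.of_eq_bot fun l h => by rw [h, Submodule.map_bot], fun hsep => ?_⟩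
  exact ⟨hsep.comap S.injective_subtype, hsep.map_of_finiteDimensional_ker hC S.mkQ⟩

/-- For a generating cone `C`, the multifiltrations induced on a
subspace `S ⊆ E` and on the quotient `Q = E/S` by an exhaustive chain-separated
multifiltration are exhaustive and chain-separated; if moreover `F` is
separated, so are the induced multifiltrations. -/
theorem induced_sub_quot {k : Type*} [Field k] {A : Type*} [AddCommGroup A]
    [AddGroup.FG A]
    (V : Type*) [AddCommGroup V] [Module ℚ V]
    (ι : A →ₗ[ℤ] V) [IsLocalizedModule (nonZeroDivisors ℤ) ι]
    (C : AddSubmonoid A)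
    (hcone : ∃ D : Set V, Convex ℚ D ∧ (∀ v ∈ D, ∀ q : ℚ, 0 ≤ q → q • v ∈ D) ∧
      (C : Set A) = ι ⁻¹' D)
    (hgen : ∀ a : A, ∃ x ∈ C, ∃ y ∈ C, a = x - y)
    {E : Type*} [AddCommGroup E] [Module k E] [FiniteDimensional k E]
    (F : A → Submodule k E) (hF : mfIsFilt C F)
    (hex : mfExhaustive F) (hcs : mfChainSeparated C F)
    (S : Submodule k E) :
    mfExhaustive (fun l => Submodule.comap S.subtype (F l)) ∧
    mfExhaustive (fun l => Submodule.map S.mkQ (F l)) ∧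
    mfChainSeparated C (fun l => Submodule.comap S.subtype (F l)) ∧
    mfChainSeparated C (fun l => Submodule.map S.mkQ (F l)) ∧
    (mfSeparated C F →
      mfSeparated C (fun l => Submodule.comap S.subtype (F l)) ∧
      mfSeparated C (fun l => Submodule.map S.mkQ (F l))) :=
  induced_sub_quot_general C hgen F hF hex hcs S
end

section
/- Let (A,C) be a preordered finitely generated abelian group, E a finite dimensional vector space with a decreasing, exhaustive, chain-separated multifiltration F, and 𝒥 ⊆ A the set of jump points (λ with gr^λ_F E = F^λE / Σ_{μ>λ}F^μE ≠ 0). Then E = Σ_{j∈𝒥} F^j E. In particular, if E ≠ 0 then 𝒥 ≠ ∅. -/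
/-! Call `λ` a non-jump point when `F^λ E ⊆ Σ_{μ > λ} F^μ E`. Chain-separatedness implies that
the relation "`μ > λ` and `F^μ E ≠ 0`" has no infinite ascending chains, so one may argue by
well-founded induction along it: a jump piece lies in the sum over jump points trivially, and a
non-jump piece lies in the sum of the strictly higher pieces, which are zero or, by induction, in
that sum. Exhaustiveness then gives the whole space. -/

namespace mfChainSeparated

variable {k : Type*} [Field k] {A : Type*} [AddCommGroup A] {C : AddSubmonoid A}
  {E : Type*} [AddCommGroup E] [Module k E] {F : A → Submodule k E}

theorem wellFounded_gt_ne_bot (hcs : mfChainSeparated C F) :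
    WellFounded fun m l : A => (m - l ∈ C ∧ l - m ∉ C) ∧ F m ≠ ⊥ := by
  refine wellFounded_iff_isEmpty_descending_chain.mpr ⟨fun ⟨l, hl⟩ => ?_⟩
  obtain ⟨i₀, hi₀⟩ := hcs l fun i => (hl i).1
  exact (hl i₀).2 (hi₀ (i₀ + 1) i₀.le_succ)

theorem le_iSup_jump (hcs : mfChainSeparated C F) (l : A) :
    F l ≤ ⨆ (j : A) (_ : mfJump C F j), F j := by
  induction l using hcs.wellFounded_gt_ne_bot.induction with
  | _ l ih =>
  by_cases hl : mfJump C F l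
  · exact le_iSup₂_of_le l hl le_rfl
  · refine (not_not.mp hl).trans (iSup₂_le fun m hm => ?_)
    obtain hm0 | hm0 := eq_or_ne (F m) ⊥
    · exact hm0 ▸ bot_le
    · exact ih m ⟨hm, hm0⟩

end mfChainSeparated

theorem sum_over_jump_points_general {k : Type*} [Field k] {A : Type*} [AddCommGroup A]
    (C : AddSubmonoid A)
    {E : Type*} [AddCommGroup E] [Module k E]
    (F : A → Submodule k E)
    (hex : mfExhaustive F) (hcs : mfChainSeparated C F) :
    (⨆ (l : A) (_ : mfJump C F l), F l) = ⊤ ∧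
    ((⊤ : Submodule k E) ≠ ⊥ → ∃ l : A, mfJump C F l) := by
  have hJ : (⨆ (l : A) (_ : mfJump C F l), F l) = ⊤ :=
    top_unique (hex ▸ iSup_le hcs.le_iSup_jump)
  refine ⟨hJ, fun hE => ?_⟩
  by_contra! hno
  simp only [hno, iSup_false, iSup_bot] at hJ
  exact hE hJ.symm

/-- For a decreasing, exhaustive, chain-separated multifiltration
on a finite dimensional vector space, `E = Σ_{j ∈ 𝒥} F^j E` where `𝒥` is the
set of jump points; in particular if `E ≠ 0` then `𝒥 ≠ ∅`. -/
theorem sum_over_jump_points {k : Type*} [Field k] {A : Type*} [AddCommGroup A]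
    [AddGroup.FG A] (C : AddSubmonoid A)
    {E : Type*} [AddCommGroup E] [Module k E] [FiniteDimensional k E]
    (F : A → Submodule k E) (hF : mfIsFilt C F)
    (hex : mfExhaustive F) (hcs : mfChainSeparated C F) :
    (⨆ (l : A) (_ : mfJump C F l), F l) = ⊤ ∧
    ((⊤ : Submodule k E) ≠ ⊥ → ∃ l : A, mfJump C F l) :=
  sum_over_jump_points_general C F hex hcs
end

section
/- Let (A,C) be a preordered finitely generated abelian group with C a polyhedral generating strict cone, and (E,F) a finite dimensional vector space with a separated decreasing multifiltration indexed by (A,C). Then the set of jump points of F is finite. Conversely, if C is generating, F is chain-separated, and F has only finitely many jump points, then F is separated. -/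
/-!
For chain-separated `F`, every `F^λ E` is spanned by the pieces at the jump points `μ ≥ λ`:
otherwise one could climb an infinite strictly increasing chain on which `F` never vanishes.
So if the jump points are finitely many, a common upper bound of all of them (which exists
because `C` is generating) lies in every `K̃` containing a jump point, while a `K` whose `K̃`
contains none has `F^K E = 0`.

Conversely, if `λ₀, λ₁, …` are distinct jump points, the pieces `F^{λᵢ : i ≥ n} E` decrease
and stabilise in the finite-dimensional `E` at a nonzero subspace, so separatedness yields a
common upper bound `v` of infinitely many `λᵢ`. As `C` is the preimage of a rational
polyhedral cone, Carathéodory's theorem and a common denominator on the finitely generated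
lattice `ι(A)` write every `ι(v - λᵢ)` as `1/N` times a natural combination of the generators,
and Dickson's lemma extracts an infinite decreasing chain of jump points. Strictness of `C`
makes the corresponding pieces strictly increasing, which is impossible in finite dimension.
-/

open Filter Function

section Multifiltration

variable {A : Type*} [AddCommGroup A] {k E : Type*} [Field k] [AddCommGroup E] [Module k E]
  {C : AddSubmonoid A} {F : A → Submodule k E}

theorem sub_mem_trans {a b c : A} (hab : b - a ∈ C) (hbc : c - b ∈ C) : c - a ∈ C := by
  rw [← sub_add_sub_cancel c b a]
  exact C.add_mem hbc hab

theorem exists_sub_mem_of_finite (hgen : ∀ a : A, ∃ x ∈ C, ∃ y ∈ C, a = x - y) {s : Set A}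
    (hs : s.Finite) : ∃ w, ∀ a ∈ s, w - a ∈ C := by
  induction s, hs using Set.Finite.induction_on with
  | empty => exact ⟨0, by simp⟩
  | @insert a s _ _ ih =>
    obtain ⟨w, hw⟩ := ih
    obtain ⟨x, hx, y, hy, hxy⟩ := hgen (a - w)
    have hwa : w + x - a = y := by rw [show a = x - y + w by rw [← hxy]; abel]; abel
    refine ⟨w + x, Set.forall_mem_insert.2 ⟨hwa ▸ hy, fun b hb => ?_⟩⟩
    exact sub_mem_trans (hw b hb) (by simpa using hx)

theorem mfJump.ne_bot {l : A} (hl : mfJump C F l) : F l ≠ ⊥ :=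
  fun h => hl (h ▸ bot_le)

theorem mfJump.lt_of_lt (hF : mfIsFilt C F) {l m : A} (hl : mfJump C F l) (hml : m - l ∈ C)
    (hlm : l - m ∉ C) : F m < F l :=
  (hF l m hml).lt_of_ne fun h => hl (h ▸ le_iSup₂_of_le m ⟨hml, hlm⟩ le_rfl)

theorem mfChainSeparated.le_iSup_mfJump (hCS : mfChainSeparated C F) (l : A) :
    F l ≤ ⨆ (j : A) (_ : mfJump C F j ∧ j - l ∈ C), F j := by
  set G : A → Submodule k E := fun a => ⨆ (j : A) (_ : mfJump C F j ∧ j - a ∈ C), F j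
  have hG : ∀ a b, b - a ∈ C → G b ≤ G a := fun a b hab =>
    iSup₂_mono' fun j hj => ⟨j, ⟨hj.1, sub_mem_trans hab hj.2⟩, le_rfl⟩
  have hstep : ∀ a : {a // ¬ F a ≤ G a}, ∃ b : {b // ¬ F b ≤ G b},
      b.1 - a.1 ∈ C ∧ a.1 - b.1 ∉ C := by
    rintro ⟨a, ha⟩
    by_contra! hb
    have hnj : ¬ mfJump C F a := fun hj => ha (le_iSup₂_of_le a ⟨hj, by simp⟩ le_rfl)
    refine ha ((not_not.1 hnj).trans (iSup₂_le fun b hab => ?_))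
    exact (not_not.1 fun h => hab.2 (hb ⟨b, h⟩ hab.1)).trans (hG a b hab.1)
  choose next hnext using hstep
  by_contra hl
  obtain ⟨i, hi⟩ := hCS (fun n => (next^[n] ⟨l, hl⟩).1) fun n => by
    simpa only [iterate_succ_apply'] using hnext _
  exact (next^[i] ⟨l, hl⟩).2 (by rw [hi i le_rfl]; exact bot_le)

theorem mfPiece_eq_bot_of_forall_not_mfJump (hCS : mfChainSeparated C F) {K : Set A}
    (hK : ∀ j ∈ mfTilde C K, ¬ mfJump C F j) : mfPiece F K = ⊥ :=
  eq_bot_iff.2 <| iSup₂_le fun l hl => (hCS.le_iSup_mfJump l).trans <|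
    iSup₂_le fun j hj => absurd hj.1 (hK j ⟨l, hl, hj.2⟩)

theorem mfSeparated_of_mfChainSeparated (hgen : ∀ a : A, ∃ x ∈ C, ∃ y ∈ C, a = x - y)
    (hCS : mfChainSeparated C F) (hfin : {l | mfJump C F l}.Finite) : mfSeparated C F := by
  intro 𝒦 h𝒦
  obtain ⟨w, hw⟩ := exists_sub_mem_of_finite hgen hfin
  obtain ⟨K, hK, hKj⟩ : ∃ K ∈ 𝒦, ∀ j ∈ mfTilde C K, ¬ mfJump C F j := by
    by_contra! h
    have hw𝒦 : w ∈ ⋂ K ∈ 𝒦, mfTilde C K := Set.mem_iInter₂.2 fun K hK => by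
      obtain ⟨j, ⟨m, hm, hjm⟩, hj⟩ := h K hK
      exact ⟨m, hm, sub_mem_trans hjm (hw j hj)⟩
    simp [h𝒦] at hw𝒦
  exact eq_bot_iff.2 <| (biInf_le _ hK).trans (mfPiece_eq_bot_of_forall_not_mfJump hCS hKj).le

theorem mfIsFilt.strictMono_comp (hF : mfIsFilt C F) (hstrict : ∀ a ∈ C, -a ∈ C → a = 0)
    {μ : ℕ → A} (hinj : Injective μ) (hanti : ∀ s t, s ≤ t → μ s - μ t ∈ C)
    (hjump : ∀ t, mfJump C F (μ t)) : StrictMono (F ∘ μ) :=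
  strictMono_nat_of_lt_succ fun t => (hjump (t + 1)).lt_of_lt hF (hanti t (t + 1) t.le_succ)
    fun h => hinj.ne t.succ_ne_self.symm <|
      sub_eq_zero.1 (hstrict _ (hanti t (t + 1) t.le_succ) (by rwa [neg_sub]))

theorem exists_frequently_sub_mem_of_mfSeparated [IsArtinian k E] (hSep : mfSeparated C F)
    {l : ℕ → A} (hl : ∀ i, F (l i) ≠ ⊥) : ∃ v, ∃ᶠ i in atTop, v - l i ∈ C := by
  let W : ℕ →o (Submodule k E)ᵒᵈ :=
    ⟨fun n => OrderDual.toDual (mfPiece F (l '' Set.Ici n)), fun m n hmn =>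
      OrderDual.toDual_le_toDual.2 <|
        biSup_mono fun _ ⟨i, hi, hil⟩ => ⟨i, hmn.trans hi, hil⟩⟩
  obtain ⟨n₀, hn₀⟩ := IsArtinian.monotone_stabilizes W
  by_contra! h
  have hempty : ⋂ K ∈ Set.range fun n => l '' Set.Ici n, mfTilde C K = ∅ := by
    refine Set.eq_empty_of_forall_notMem fun v hv => ?_
    obtain ⟨n, hn⟩ := eventually_atTop.1 (h v)
    obtain ⟨_, ⟨i, hi, rfl⟩, hvi⟩ := Set.mem_iInter₂.1 hv _ ⟨n, rfl⟩
    exact hn i hi hvi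
  have hbot := hSep _ hempty
  rw [iInf_range] at hbot
  refine hl n₀ (eq_bot_iff.2 ?_)
  calc F (l n₀) ≤ mfPiece F (l '' Set.Ici n₀) :=
        le_biSup _ (Set.mem_image_of_mem l Set.self_mem_Ici)
    _ ≤ ⨅ n, mfPiece F (l '' Set.Ici n) := le_iInf fun n => OrderDual.toDual_le_toDual.1 <|
        (le_total n n₀).elim (fun h => W.monotone h) fun h => (hn₀ n h).ge
    _ = ⊥ := hbot

end Multifiltration

theorem linearIndepOn_iff_of_fintype {R V κ : Type*} [Ring R] [AddCommGroup V] [Module R V]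
    [Fintype κ] {w : κ → V} {s : Set κ} : LinearIndepOn R w s ↔
    ∀ g : κ → R, support g ⊆ s → ∑ i, g i • w i = 0 → g = 0 := by
  classical
  rw [linearIndepOn_iff'']
  constructor
  · intro h g hgs hg
    funext i
    by_cases hi : i ∈ s
    · refine h s.toFinset g (by simp) (fun j hj => notMem_support.1 fun hj' => ?_) ?_ i (by simpa)
      · exact hj (Set.mem_toFinset.2 (hgs hj'))
      · rwa [Finset.sum_subset (Finset.subset_univ _) fun j _ hj => ?_]
        rw [notMem_support.1 fun hj' => hj (Set.mem_toFinset.2 (hgs hj')), zero_smul]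
    · exact notMem_support.1 fun hi' => hi (hgs hi')
  · intro h t g hts hgt hg i hi
    refine congr_fun (h g (fun j hj => hts ?_) ?_) i
    · by_contra hjt
      exact hj (hgt j hjt)
    · rwa [← Finset.sum_subset (Finset.subset_univ t) fun j _ hj => by rw [hgt j hj, zero_smul]]

section Caratheodory

variable {𝕜 V κ : Type*} [Field 𝕜] [LinearOrder 𝕜] [IsStrictOrderedRing 𝕜]
  [AddCommGroup V] [Module 𝕜 V] [Fintype κ] {w : κ → V}

theorem exists_nonneg_sum_eq_of_relation {f g : κ → 𝕜} (hf : ∀ i, 0 ≤ f i)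
    (hgf : support g ⊆ support f) (hg : ∑ i, g i • w i = 0) (hpos : ∃ i, 0 < g i) :
    ∃ f' : κ → 𝕜, (∀ i, 0 ≤ f' i) ∧ support f' ⊂ support f ∧
      ∑ i, f' i • w i = ∑ i, f i • w i := by
  classical
  obtain ⟨i₀, hi₀, hmin⟩ := (Finset.univ.filter fun i => 0 < g i).exists_min_image
    (fun i => f i / g i) (by simpa [Finset.filter_nonempty_iff] using hpos)
  simp only [Finset.mem_filter, Finset.mem_univ, true_and] at hi₀ hmin
  set t := f i₀ / g i₀
  refine ⟨f - t • g, fun i => ?_, Set.ssubset_iff_exists.2 ⟨fun i hi => ?_, i₀, ?_⟩, ?_⟩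
  · -- `t` is the largest step along `-g` that keeps every coordinate nonnegative
    change 0 ≤ f i - t * g i
    rcases lt_or_ge 0 (g i) with hgi | hgi
    · linarith [(le_div_iff₀ hgi).1 (hmin i hgi)]
    · have ht : 0 ≤ t := div_nonneg (hf i₀) hi₀.le
      nlinarith [hf i, mul_nonneg ht (neg_nonneg.2 hgi)]
  · by_contra hfi
    have hgi : g i = 0 := notMem_support.1 fun h => hfi (hgf h)
    exact hi (by simp [notMem_support.1 hfi, hgi])
  · refine ⟨hgf hi₀.ne', notMem_support.2 ?_⟩
    simp [t, div_mul_cancel₀ _ hi₀.ne']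
  · simp only [Pi.sub_apply, Pi.smul_apply, smul_eq_mul, sub_smul, mul_smul,
      Finset.sum_sub_distrib, ← Finset.smul_sum, hg, smul_zero, sub_zero]

theorem exists_nonneg_linearIndepOn_sum_eq (w : κ → V) {f : κ → 𝕜} (hf : ∀ i, 0 ≤ f i) :
    ∃ f' : κ → 𝕜, (∀ i, 0 ≤ f' i) ∧ LinearIndepOn 𝕜 w (support f') ∧
      ∑ i, f' i • w i = ∑ i, f i • w i := by
  obtain ⟨f', ⟨hf'0, hf'w⟩, hmin⟩ :=
    (measure fun f : κ → 𝕜 => (support f).ncard).wf.has_min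
      {f' | (∀ i, 0 ≤ f' i) ∧ ∑ i, f' i • w i = ∑ i, f i • w i} ⟨f, hf, rfl⟩
  refine ⟨f', hf'0, ?_, hf'w⟩
  by_contra hli
  obtain ⟨g, hgf, hg, hg0⟩ :
      ∃ g : κ → 𝕜, support g ⊆ support f' ∧ ∑ i, g i • w i = 0 ∧ g ≠ 0 := by
    simpa [linearIndepOn_iff_of_fintype] using hli
  obtain ⟨g', hg'f, hg', hpos⟩ :
      ∃ g' : κ → 𝕜, support g' ⊆ support f' ∧ ∑ i, g' i • w i = 0 ∧ ∃ i, 0 < g' i := by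
    obtain ⟨i, hi⟩ := Function.ne_iff.1 hg0
    rcases hi.lt_or_gt with h | h
    · exact ⟨-g, by simpa using hgf, by simp [hg], i, by simpa using h⟩
    · exact ⟨g, hgf, hg, i, h⟩
  obtain ⟨f'', hf''0, hsub, hf''w⟩ := exists_nonneg_sum_eq_of_relation hf'0 hg'f hg' hpos
  exact hmin f'' ⟨hf''0, hf''w.trans hf'w⟩ (Set.ncard_lt_ncard hsub)

end Caratheodory

section RationalCone

variable {V κ : Type*} [AddCommGroup V] [Module ℚ V] [Fintype κ]

theorem Submodule.FG.exists_common_denominator {G : Submodule ℤ (κ → ℚ)} (hG : G.FG) :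
    ∃ N : ℕ, 0 < N ∧ ∀ f ∈ G, ∀ i, ∃ z : ℤ, N * f i = z := by
  classical
  obtain ⟨S, rfl⟩ := hG
  refine ⟨∏ q ∈ S, ∏ i, (q i).den,
    Finset.prod_pos fun q _ => Finset.prod_pos fun i _ => (q i).pos, fun f hf => ?_⟩
  induction hf using Submodule.span_induction with
  | mem q hq =>
    intro i
    obtain ⟨m, hm⟩ : (q i).den ∣ ∏ q ∈ S, ∏ i, (q i).den :=
      (Finset.dvd_prod_of_mem _ (Finset.mem_univ i)).trans
        (Finset.dvd_prod_of_mem (fun q : κ → ℚ => ∏ i, (q i).den) hq)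
    refine ⟨m * (q i).num, ?_⟩
    rw [hm]
    push_cast
    rw [← Rat.mul_den_eq_num]
    ring
  | zero => exact fun i => ⟨0, by simp⟩
  | add f g _ _ hf hg =>
    intro i
    obtain ⟨a, ha⟩ := hf i
    obtain ⟨b, hb⟩ := hg i
    exact ⟨a + b, by rw [Pi.add_apply, mul_add, ha, hb]; push_cast; rfl⟩
  | smul a f _ hf =>
    intro i
    obtain ⟨b, hb⟩ := hf i
    exact ⟨a * b, by rw [Pi.smul_apply, zsmul_eq_mul, mul_left_comm, hb]; push_cast; rfl⟩

theorem fg_comap_inf_pi_of_linearIndepOn {L : Submodule ℤ V} (hL : L.FG) {w : κ → V}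
    {B : Set κ} (hB : LinearIndepOn ℚ w B) :
    (L.comap ((Fintype.linearCombination ℚ w).restrictScalars ℤ) ⊓
      Submodule.pi Bᶜ fun _ => ⊥).FG := by
  refine Submodule.fg_of_fg_map_of_fg_inf_ker _
    (hL.of_le (Submodule.map_le_iff_le_comap.2 inf_le_left)) ?_
  convert Submodule.fg_bot
  refine eq_bot_iff.2 fun f ⟨⟨_, hfB⟩, hf⟩ => ?_
  refine (Submodule.mem_bot ℤ).2 (linearIndepOn_iff_of_fintype.1 hB f (fun i hi => ?_) hf)
  by_contra hiB
  exact hi (by simpa using (Submodule.mem_pi.1 hfB) i hiB)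

theorem exists_common_denominator_of_linearIndepOn {L : Submodule ℤ V} (hL : L.FG)
    (w : κ → V) : ∃ N : ℕ, 0 < N ∧ ∀ f : κ → ℚ, LinearIndepOn ℚ w (support f) →
      ∑ i, f i • w i ∈ L → ∀ i, ∃ z : ℤ, N * f i = z := by
  obtain ⟨N, hN, hNG⟩ := (Submodule.fg_iSup _ fun B : {B : Set κ // LinearIndepOn ℚ w B} =>
    fg_comap_inf_pi_of_linearIndepOn hL B.2).exists_common_denominator
  refine ⟨N, hN, fun f hf hfL => hNG f (Submodule.mem_iSup_of_mem ⟨support f, hf⟩ ⟨hfL, ?_⟩)⟩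
  simp

def nonnegSpan (w : κ → V) : Set V :=
  {v | ∃ f : κ → ℚ, (∀ i, 0 ≤ f i) ∧ v = ∑ i, f i • w i}

theorem sub_mem_nonnegSpan {w : κ → V} {f f' : κ → ℚ} (h : f ≤ f') :
    ∑ i, f' i • w i - ∑ i, f i • w i ∈ nonnegSpan w :=
  ⟨f' - f, fun i => sub_nonneg.2 (h i), by simp [sub_smul, Finset.sum_sub_distrib]⟩

theorem exists_subseq_sub_mem_nonnegSpan {L : Submodule ℤ V} (hL : L.FG) (w : κ → V)
    {x : ℕ → V} (hxL : ∀ j, x j ∈ L) (hx : ∀ j, x j ∈ nonnegSpan w) :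
    ∃ φ : ℕ ↪o ℕ, ∀ s t, s ≤ t → x (φ t) - x (φ s) ∈ nonnegSpan w := by
  obtain ⟨N, hN, hden⟩ := exists_common_denominator_of_linearIndepOn hL w
  set P : Set (κ → ℚ) := Set.range fun u : κ → ℕ => fun i => (u i : ℚ) / N
  have hrep : ∀ j, ∃ f ∈ P, x j = ∑ i, f i • w i := by
    intro j
    obtain ⟨f₀, hf₀, hxj⟩ := hx j
    obtain ⟨f, hf, hfli, hfw⟩ := exists_nonneg_linearIndepOn_sum_eq w (f := f₀) hf₀
    rw [← hfw] at hxj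
    have hnat : ∀ i, ∃ u : ℕ, (u : ℚ) / N = f i := fun i => by
      obtain ⟨z, hz⟩ := hden f hfli (hxj ▸ hxL j) i
      lift z to ℕ using by
        have := mul_nonneg N.cast_nonneg (hf i)
        rw [hz] at this
        exact_mod_cast this
      exact ⟨z, by rw [div_eq_iff (by positivity), mul_comm, hz]; rfl⟩
    choose u hu using hnat
    exact ⟨f, ⟨u, funext hu⟩, hxj⟩
  choose f hfP hxf using hrep
  -- Dickson's lemma, transported along `u ↦ u / N`
  have hP : P.IsPWO := by
    simp only [P, ← Set.image_univ]
    exact (Set.isPWO_of_wellQuasiOrderedLE _).image_of_monotone fun u u' h i => by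
      gcongr
      exact h i
  obtain ⟨φ, hφ⟩ := hP.exists_monotone_subseq hfP
  exact ⟨φ, fun s t hst => by rw [hxf, hxf]; exact sub_mem_nonnegSpan (hφ hst)⟩

end RationalCone

theorem finite_mfJump_of_mfSeparated {A V κ : Type*} [AddCommGroup A] [AddGroup.FG A]
    [AddCommGroup V] [Module ℚ V] [Fintype κ] {k E : Type*} [Field k] [AddCommGroup E]
    [Module k E] [FiniteDimensional k E] {C : AddSubmonoid A} {F : A → Submodule k E}
    (ι : A →ₗ[ℤ] V) (g : κ → A) (hC : (C : Set A) = ι ⁻¹' nonnegSpan (ι ∘ g))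
    (hstrict : ∀ a ∈ C, -a ∈ C → a = 0) (hF : mfIsFilt C F) (hSep : mfSeparated C F) :
    {l | mfJump C F l}.Finite := by
  by_contra hinf
  set e := Set.Infinite.natEmbedding _ hinf
  obtain ⟨v, hv⟩ := exists_frequently_sub_mem_of_mfSeparated hSep fun i => (e i).2.ne_bot
  obtain ⟨σ, hσ, hσv⟩ := extraction_of_frequently_atTop hv
  have hL : (LinearMap.range ι).FG := by
    have := Module.Finite.iff_addGroup_fg.2 ‹_›
    rw [LinearMap.range_eq_map]
    exact Module.Finite.fg_top.map ι
  obtain ⟨φ, hφ⟩ := exists_subseq_sub_mem_nonnegSpan hL (ι ∘ g)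
    (x := fun j => ι (v - e (σ j))) (fun j => LinearMap.mem_range_self ι _)
    fun j => (Set.ext_iff.1 hC _).1 (hσv j)
  set μ : ℕ → A := fun t => e (σ (φ t))
  have hanti : ∀ s t, s ≤ t → μ s - μ t ∈ C := fun s t hst => by
    rw [← SetLike.mem_coe, hC, Set.mem_preimage]
    convert hφ s t hst using 1
    simp only [μ, map_sub]
    abel
  have hinj : Injective μ :=
    Subtype.val_injective.comp (e.injective.comp (hσ.injective.comp φ.injective))
  exact not_strictMono_of_wellFoundedGT _ (hF.strictMono_comp hstrict hinj hanti fun t => (e _).2)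

theorem jump_points_finite_iff_separated_general {k : Type*} [Field k] {A : Type*}
    [AddCommGroup A] [AddGroup.FG A]
    (V : Type*) [AddCommGroup V] [Module ℚ V]
    (ι : A →ₗ[ℤ] V)
    (C : AddSubmonoid A) (D : Set V)
    (hC : (C : Set A) = ι ⁻¹' D)
    (hgen : ∀ a : A, ∃ x ∈ C, ∃ y ∈ C, a = x - y)
    {E : Type*} [AddCommGroup E] [Module k E] [FiniteDimensional k E]
    (F : A → Submodule k E) (hF : mfIsFilt C F) :
    ((∃ (n : ℕ) (g : Fin n → A),
        D = {v : V | ∃ f : Fin n → ℚ, (∀ i, 0 ≤ f i) ∧ v = ∑ i, f i • ι (g i)}) →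
      (∀ a ∈ C, -a ∈ C → a = 0) →
      mfSeparated C F → {l : A | mfJump C F l}.Finite) ∧
    (mfChainSeparated C F → {l : A | mfJump C F l}.Finite →
      mfSeparated C F) := by
  refine ⟨?_, mfSeparated_of_mfChainSeparated hgen⟩
  rintro ⟨n, g, rfl⟩ hstrict hSep
  exact finite_mfJump_of_mfSeparated ι g hC hstrict hF hSep

/-- For `C = ι⁻¹(D)` a generating cone: if `D` is rational
polyhedral and `C` is strict, a separated multifiltration has finitely many
jump points; conversely a chain-separated multifiltration with finitely many
jump points is separated. -/
theorem jump_points_finite_iff_separated {k : Type*} [Field k] {A : Type*}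
    [AddCommGroup A] [AddGroup.FG A]
    (V : Type*) [AddCommGroup V] [Module ℚ V]
    (ι : A →ₗ[ℤ] V) [IsLocalizedModule (nonZeroDivisors ℤ) ι]
    (C : AddSubmonoid A) (D : Set V)
    (hDconv : Convex ℚ D) (hDcone : ∀ v ∈ D, ∀ q : ℚ, 0 ≤ q → q • v ∈ D)
    (hC : (C : Set A) = ι ⁻¹' D)
    (hgen : ∀ a : A, ∃ x ∈ C, ∃ y ∈ C, a = x - y)
    {E : Type*} [AddCommGroup E] [Module k E] [FiniteDimensional k E]
    (F : A → Submodule k E) (hF : mfIsFilt C F) :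
    ((∃ (n : ℕ) (g : Fin n → A),
        D = {v : V | ∃ f : Fin n → ℚ, (∀ i, 0 ≤ f i) ∧ v = ∑ i, f i • ι (g i)}) →
      (∀ a ∈ C, -a ∈ C → a = 0) →
      mfSeparated C F → {l : A | mfJump C F l}.Finite) ∧
    (mfChainSeparated C F → {l : A | mfJump C F l}.Finite →
      mfSeparated C F) :=
  jump_points_finite_iff_separated_general V ι C D hC hgen F hF
end
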